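/- arXiv:2405.15044 — 2 statements merged into one kernel-verified Lean document; each statement's English description precedes it below -/
import Mathlib

section
/- Every vertex of a totally oriented Klein graph is incident to an odd number of negative (antiparallel) edges; in particular, the number of negative edges incident to each vertex is 1 or 3. -/
set_option maxRecDepth 100000 in
private lemma klein_key : ∀ y : Fin 3 → Fin 3 → Bool,
    (∀ k a b : Fin 3, a ≠ k → b ≠ k → a ≠ b → y a k ≠ y b k) →
    ((Finset.univ.filter (fun c : Fin 3 =>
        ∃ m m' : Fin 3, m ≠ c ∧ m' ≠ c ∧ m ≠ m' ∧ y c m ≠ y c m')).card = 1 ∨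
     (Finset.univ.filter (fun c : Fin 3 =>
        ∃ m m' : Fin 3, m ≠ c ∧ m' ≠ c ∧ m ≠ m' ∧ y c m ≠ y c m')).card = 3) := by
  decide

private lemma fin3_resolve : ∀ k a b c : Fin 3, a ≠ k → b ≠ k → a ≠ b → c ≠ k →
    c = a ∨ c = b := by decide



/-- A Klein graph is modeled combinatorially (finite vertex/edge types,
each edge with two distinct endpoints, proper 3-edge-coloring `color`, each vertex
incident to one edge of each color).  A total orientation is an orientation of each
bicolored link `Γ_{ij}`: we index the three color pairs by the *missing* color `k`,
and `dir k e` gives the direction of each edge `e` of the pair (colors `≠ k`),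
`true` meaning it runs from `(ends e).1` to `(ends e).2`.  Coherence of the
orientation along the bicolored cycles is the condition `hcoh`: at each vertex,
exactly one of the two pair-colored edges is directed into the vertex.
An `i`-colored edge is *negative* (antiparallel) iff its two induced directions
(from the two color pairs containing `i`, i.e. the two missing colors `m ≠ color e`)
disagree.  Then every vertex is incident to an odd number of negative edges;
in particular this number is `1` or `3`. -/
theorem stmt1 {V E : Type*} [Fintype V] [Fintype E] [DecidableEq V] [DecidableEq E]
    (ends : E → V × V) (color : E → Fin 3)
    (hne : ∀ e, (ends e).1 ≠ (ends e).2)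
    (hklein : ∀ (v : V) (c : Fin 3),
      ∃! e : E, color e = c ∧ ((ends e).1 = v ∨ (ends e).2 = v))
    (dir : Fin 3 → E → Bool)
    (hcoh : ∀ (k : Fin 3) (v : V),
      ∃! e : E, color e ≠ k ∧
        ((dir k e = true ∧ (ends e).2 = v) ∨ (dir k e = false ∧ (ends e).1 = v))) :
    ∀ v : V,
      Odd ((Finset.univ.filter (fun e : E =>
          (∃ m m' : Fin 3, m ≠ color e ∧ m' ≠ color e ∧ m ≠ m' ∧ dir m e ≠ dir m' e)
            ∧ ((ends e).1 = v ∨ (ends e).2 = v))).card) ∧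
      ((Finset.univ.filter (fun e : E =>
          (∃ m m' : Fin 3, m ≠ color e ∧ m' ≠ color e ∧ m ≠ m' ∧ dir m e ≠ dir m' e)
            ∧ ((ends e).1 = v ∨ (ends e).2 = v))).card = 1 ∨
       (Finset.univ.filter (fun e : E =>
          (∃ m m' : Fin 3, m ≠ color e ∧ m' ≠ color e ∧ m ≠ m' ∧ dir m e ≠ dir m' e)
            ∧ ((ends e).1 = v ∨ (ends e).2 = v))).card = 3) := by
  intro v
  classical
  choose E3 hE3 hU using fun c => hklein v c
  have hcolE : ∀ c, color (E3 c) = c := fun c => (hE3 c).1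
  have hincE : ∀ c, (ends (E3 c)).1 = v ∨ (ends (E3 c)).2 = v := fun c => (hE3 c).2
  have hEinj : Function.Injective E3 := by
    intro a b h
    rw [← hcolE a, ← hcolE b, h]
  set y : Fin 3 → Fin 3 → Bool :=
    fun c k => dir k (E3 c) == decide ((ends (E3 c)).2 = v) with hy
  -- y c k = true ↔ edge of color c is directed into v in pair k
  have hyiff : ∀ c k, y c k = true ↔
      ((dir k (E3 c) = true ∧ (ends (E3 c)).2 = v) ∨
       (dir k (E3 c) = false ∧ (ends (E3 c)).1 = v)) := by
    intro c k
    rcases hincE c with h1 | h2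
    · have h2 : ¬ ((ends (E3 c)).2 = v) := fun h => hne (E3 c) (h1.trans h.symm)
      simp [hy, h1, h2]
    · have h1 : ¬ ((ends (E3 c)).1 = v) := fun h => hne (E3 c) (h.trans h2.symm)
      simp [hy, h1, h2]
  -- dir disagreement ↔ y disagreement
  have hdiry : ∀ c m m', (dir m (E3 c) ≠ dir m' (E3 c)) ↔ (y c m ≠ y c m') := by
    intro c m m'
    simp only [hy]
    cases dir m (E3 c) <;> cases dir m' (E3 c) <;>
      cases decide ((ends (E3 c)).2 = v) <;> simp
  -- column constraint from coherence
  have hcolcon : ∀ k a b : Fin 3, a ≠ k → b ≠ k → a ≠ b → y a k ≠ y b k := by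
    intro k a b hak hbk hab hyab
    obtain ⟨f, ⟨hfk, hfin⟩, hfu⟩ := hcoh k v
    have hfinc : (ends f).1 = v ∨ (ends f).2 = v := by
      rcases hfin with ⟨_, h⟩ | ⟨_, h⟩
      · exact Or.inr h
      · exact Or.inl h
    have hf : f = E3 (color f) := hU (color f) f ⟨rfl, hfinc⟩
    by_cases ha : y a k = true
    · have hb : y b k = true := hyab ▸ ha
      have h1 : E3 a = f := hfu (E3 a) ⟨by rw [hcolE]; exact hak, (hyiff a k).1 ha⟩
      have h2 : E3 b = f := hfu (E3 b) ⟨by rw [hcolE]; exact hbk, (hyiff b k).1 hb⟩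
      exact hab (hEinj (h1.trans h2.symm))
    · have hb : ¬ (y b k = true) := hyab ▸ ha
      have hcf : y (color f) k = true := by
        rw [hyiff]; rw [← hf]; exact hfin
      rcases fin3_resolve k a b (color f) hak hbk hab hfk with h | h
      · exact ha (h ▸ hcf)
      · exact hb (h ▸ hcf)
  -- identify the filter set with the image of negative colors
  have hset : (Finset.univ.filter (fun e : E =>
      (∃ m m' : Fin 3, m ≠ color e ∧ m' ≠ color e ∧ m ≠ m' ∧ dir m e ≠ dir m' e)
        ∧ ((ends e).1 = v ∨ (ends e).2 = v))) =
      (Finset.univ.filter (fun c : Fin 3 =>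
        ∃ m m' : Fin 3, m ≠ c ∧ m' ≠ c ∧ m ≠ m' ∧ y c m ≠ y c m')).image E3 := by
    ext f
    simp only [Finset.mem_filter, Finset.mem_image, Finset.mem_univ, true_and]
    constructor
    · rintro ⟨⟨m, m', hm, hm', hmm', hd⟩, hinc⟩
      refine ⟨color f, ⟨m, m', hm, hm', hmm', ?_⟩, (hU (color f) f ⟨rfl, hinc⟩).symm⟩
      have hf : f = E3 (color f) := hU (color f) f ⟨rfl, hinc⟩
      rw [← hdiry]
      rw [← hf]
      exact hd
    · rintro ⟨c, ⟨m, m', hm, hm', hmm', hd⟩, rfl⟩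
      refine ⟨⟨m, m', ?_, ?_, hmm', ?_⟩, hincE c⟩
      · rw [hcolE]; exact hm
      · rw [hcolE]; exact hm'
      · rw [hdiry]; exact hd
  rw [hset, Finset.card_image_of_injective _ hEinj]
  have h13 := klein_key y hcolcon
  refine ⟨?_, h13⟩
  rcases h13 with h | h <;> rw [h] <;> decide
end

section
/- If two vertices of a totally oriented Klein graph are joined by an edge, then either the two vertices have opposite orientation types, or they belong to the same tetrahedral orientation class; consequently a connected totally oriented Klein graph with at least one vertex either contains a pair of oppositely oriented vertices or contains vertices of all four orientation types of one tetrahedral class. -/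
/-! STATEMENT 3.  Setup as in the other statements: a (spatial) Klein graph is modeled
combinatorially by finite vertex/edge types, endpoints, a proper 3-edge-coloring, and
a total orientation `dir` of the three bicolored links (indexed by the missing color),
coherent around each vertex.  The local orientation type of a vertex `v` is encoded
as `Bv v : Fin 3 → Bool`, where `Bv v k = true` iff, for the color pair missing `k`,
the incident edge colored `firstOther k` is directed into `v`.  Two vertices have
*opposite* orientation types iff their types differ in all three coordinates; they
belong to the *same tetrahedral class* iff their types differ in an even number of
coordinates (the two tetrahedral classes are the two independent 4-element vertex
sets of the cube graph of types). -/

/-- The first of the two colors other than `k`. -/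
def firstOther (k : Fin 3) : Fin 3 := if k = 0 then 1 else 0

lemma firstOther_ne : ∀ k : Fin 3, firstOther k ≠ k := by decide

lemma fin3_iff : ∀ k c d : Fin 3, k ≠ c → k ≠ d → c ≠ d →
    ((c = firstOther k) ↔ ¬ d = firstOther k) := by decide

lemma bool_trans : ∀ a b c : Bool, a ≠ b → b ≠ c → a = c := by decide

/-- Opposite orientation types: the types differ in every coordinate
(reversal of all three bicolored orientations). -/
def oppositeType {V : Type*} (Bv : V → Fin 3 → Bool) (u v : V) : Prop :=
  ∀ k, Bv u k ≠ Bv v k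

/-- Same tetrahedral class: the types differ in an even number of coordinates. -/
def sameTetra {V : Type*} (Bv : V → Fin 3 → Bool) (u v : V) : Prop :=
  Even ((Finset.univ.filter (fun k => Bv u k ≠ Bv v k)).card)

theorem stmt3 {V E : Type*} [Fintype V] [Fintype E] [DecidableEq V] [DecidableEq E]
    (ends : E → V × V) (color : E → Fin 3)
    (hne : ∀ e, (ends e).1 ≠ (ends e).2)
    (hklein : ∀ (v : V) (c : Fin 3),
      ∃! e : E, color e = c ∧ ((ends e).1 = v ∨ (ends e).2 = v))
    (dir : Fin 3 → E → Bool)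
    (hcoh : ∀ (k : Fin 3) (v : V),
      ∃! e : E, color e ≠ k ∧
        ((dir k e = true ∧ (ends e).2 = v) ∨ (dir k e = false ∧ (ends e).1 = v)))
    -- the local orientation type of each vertex:
    (Bv : V → Fin 3 → Bool)
    (hBv : ∀ (v : V) (k : Fin 3), Bv v k = true ↔
      ∃ e : E, color e = firstOther k ∧
        ((dir k e = true ∧ (ends e).2 = v) ∨ (dir k e = false ∧ (ends e).1 = v))) :
    -- (1) two vertices joined by an edge have opposite types or lie in the same
    -- tetrahedral class;
    (∀ (u v : V) (e : E), (ends e = (u, v) ∨ ends e = (v, u)) →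
        oppositeType Bv u v ∨ sameTetra Bv u v) ∧
    -- (2) consequently, a connected totally oriented Klein graph with at least one
    -- vertex contains a pair of oppositely oriented vertices or contains vertices of
    -- all four orientation types of one tetrahedral class.
    ((∀ a b : V,
        Relation.ReflTransGen (fun x y => ∃ e, ends e = (x, y) ∨ ends e = (y, x)) a b) →
      Nonempty V →
      (∃ u v : V, oppositeType Bv u v) ∨
      (∃ v : V, ∀ g : Fin 3 → Bool,
        Even ((Finset.univ.filter (fun k => Bv v k ≠ g k)).card) → ∃ u : V, Bv u = g)) := by
  classical
  -- characterization of Bv at the head of an in-edge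
  have BvIn : ∀ (e : E) (k : Fin 3) (v : V), color e ≠ k →
      ((dir k e = true ∧ (ends e).2 = v) ∨ (dir k e = false ∧ (ends e).1 = v)) →
      (Bv v k = true ↔ color e = firstOther k) := by
    intro e k v hck hin
    obtain ⟨f, hf, huniq⟩ := hcoh k v
    have hef : e = f := huniq e ⟨hck, hin⟩
    constructor
    · intro hb
      obtain ⟨e₁, he₁c, he₁⟩ := (hBv v k).1 hb
      have h1 : e₁ = f := huniq e₁ ⟨by rw [he₁c]; exact firstOther_ne k, he₁⟩
      rw [hef, ← h1]; exact he₁c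
    · intro hc
      exact (hBv v k).2 ⟨e, hc, hin⟩
  -- characterization of Bv at the tail of an out-edge
  have BvOut : ∀ (e : E) (k : Fin 3) (u : V), color e ≠ k →
      ((dir k e = true ∧ (ends e).1 = u) ∨ (dir k e = false ∧ (ends e).2 = u)) →
      (Bv u k = true ↔ ¬ color e = firstOther k) := by
    intro e k u hck hout
    obtain ⟨e', ⟨he'k, he'in⟩, huniq⟩ := hcoh k u
    have hne' : e' ≠ e := by
      intro h; subst h
      rcases hout with ⟨hd, h1⟩ | ⟨hd, h1⟩ <;> rcases he'in with ⟨hd', h2⟩ | ⟨hd', h2⟩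
      · exact hne e' (h1.trans h2.symm)
      · simp_all
      · simp_all
      · exact hne e' (h2.trans h1.symm)
    have hcc : color e' ≠ color e := by
      intro h
      obtain ⟨f, hf, huq⟩ := hklein u (color e)
      have h1 : e' = f := huq e' ⟨h, by
        rcases he'in with ⟨_, h2⟩ | ⟨_, h2⟩
        · exact Or.inr h2
        · exact Or.inl h2⟩
      have h2 : e = f := huq e ⟨rfl, by
        rcases hout with ⟨_, h2⟩ | ⟨_, h2⟩
        · exact Or.inl h2
        · exact Or.inr h2⟩
      exact hne' (h1.trans h2.symm)
    rw [BvIn e' k u he'k he'in]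
    exact fin3_iff k (color e') (color e) (Ne.symm he'k) (Ne.symm hck) hcc
  -- key: across an edge, the types differ at every coordinate other than the color
  have tool : ∀ {a b : Bool} {P : Prop}, (a = true ↔ P) → (b = true ↔ ¬P) → a ≠ b := by
    intro a b P hA hB hab
    by_cases hP : P
    · exact hB.1 (hab.symm.trans (hA.2 hP)) hP
    · exact hP (hA.1 (hab.trans (hB.2 hP)))
  have key : ∀ (e : E) (k : Fin 3), color e ≠ k →
      Bv (ends e).1 k ≠ Bv (ends e).2 k := by
    intro e k hck
    cases hd : dir k e with
    | true =>
      have h1 := BvOut e k (ends e).1 hck (Or.inl ⟨hd, rfl⟩)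
      have h2 := BvIn e k (ends e).2 hck (Or.inl ⟨hd, rfl⟩)
      exact (tool h2 h1).symm
    | false =>
      have h1 := BvIn e k (ends e).1 hck (Or.inr ⟨hd, rfl⟩)
      have h2 := BvOut e k (ends e).2 hck (Or.inr ⟨hd, rfl⟩)
      exact tool h1 h2
  have part1 : ∀ (u v : V) (e : E), (ends e = (u, v) ∨ ends e = (v, u)) →
      oppositeType Bv u v ∨ sameTetra Bv u v := by
    intro u v e hev
    have hdiff : ∀ k, k ≠ color e → Bv u k ≠ Bv v k := by
      intro k hk
      have h := key e k (Ne.symm hk)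
      rcases hev with h' | h'
      · rw [h'] at h; exact h
      · rw [h'] at h; exact h.symm
    by_cases hc : Bv u (color e) = Bv v (color e)
    · right
      have hset : (Finset.univ.filter (fun k => Bv u k ≠ Bv v k)) =
          Finset.univ.filter (fun k => k ≠ color e) := by
        ext k
        simp only [Finset.mem_filter, Finset.mem_univ, true_and]
        constructor
        · intro h hk; subst hk; exact h hc
        · intro h; exact hdiff k h
      rw [sameTetra, hset]
      have hcard : ∀ c : Fin 3, (Finset.univ.filter (fun k => k ≠ c)).card = 2 := by decide
      rw [hcard]
      exact even_two
    · left
      intro k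
      by_cases hk : k = color e
      · subst hk; exact hc
      · exact hdiff k hk
  refine ⟨part1, ?_⟩
  intro _ hV
  by_cases hopp : ∃ u v : V, oppositeType Bv u v
  · exact Or.inl hopp
  push_neg at hopp
  right
  obtain ⟨v0⟩ := hV
  refine ⟨v0, ?_⟩
  intro g hg
  by_cases hgv : Bv v0 = g
  · exact ⟨v0, hgv⟩
  -- the difference set has exactly two elements
  set s := Finset.univ.filter (fun k => Bv v0 k ≠ g k) with hs
  have hsne : s.Nonempty := by
    rcases Function.ne_iff.1 hgv with ⟨k, hk⟩
    exact ⟨k, by simp [hs, hk]⟩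
  have hsle : s.card ≤ 3 := by
    have := Finset.card_filter_le (Finset.univ : Finset (Fin 3))
      (fun k => Bv v0 k ≠ g k)
    simpa using this
  have hsc : s.card = 2 := by
    obtain ⟨m, hm⟩ := hg
    have h0 : s.card ≠ 0 := by
      simpa [Finset.card_eq_zero, Finset.nonempty_iff_ne_empty] using hsne
    have : s.card = m + m := hm
    omega
  -- extract the unique coordinate of agreement
  have ht : (Finset.univ.filter (fun k => Bv v0 k = g k)) = Finset.univ \ s := by
    ext k
    simp only [hs, Finset.mem_filter, Finset.mem_univ, true_and, Finset.mem_sdiff, not_not]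
  have htc : (Finset.univ.filter (fun k => Bv v0 k = g k)).card = 1 := by
    rw [ht, Finset.card_sdiff_of_subset (Finset.subset_univ s), hsc]
    decide
  obtain ⟨c, hc⟩ := Finset.card_eq_one.1 htc
  have hcagree : Bv v0 c = g c := by
    have : c ∈ Finset.univ.filter (fun k => Bv v0 k = g k) := by rw [hc]; simp
    simpa using this
  have huc : ∀ k, Bv v0 k = g k → k = c := by
    intro k hk
    have : k ∈ Finset.univ.filter (fun k => Bv v0 k = g k) := by simp [hk]
    rw [hc] at this; simpa using this
  -- take the edge at v0 colored c; its other endpoint has type g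
  obtain ⟨e, ⟨hec, hein⟩, _⟩ := hklein v0 c
  have nbhr : ∀ u : V, (ends e = (v0, u) ∨ ends e = (u, v0)) → Bv u = g := by
    intro u hu
    have hdiff : ∀ k, k ≠ c → Bv u k ≠ Bv v0 k := by
      intro k hk
      have h := key e k (by rw [hec]; exact Ne.symm hk)
      rcases hu with h' | h'
      · rw [h'] at h; exact h.symm
      · rw [h'] at h; exact h
    have hagr : Bv u c = Bv v0 c := by
      have h := hopp u v0
      rw [oppositeType] at h
      push_neg at h
      obtain ⟨k, hk⟩ := h
      by_cases hkc : k = c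
      · rw [← hkc]; exact hk
      · exact absurd hk (hdiff k hkc)
    funext k
    by_cases hk : k = c
    · subst hk; rw [hagr, hcagree]
    · have h1 : Bv u k ≠ Bv v0 k := hdiff k hk
      have h2 : Bv v0 k ≠ g k := fun h => hk (huc k h)
      exact bool_trans _ _ _ h1 h2
  rcases hein with h1 | h2
  · exact ⟨(ends e).2, nbhr _ (Or.inl (by rw [← h1]))⟩
  · exact ⟨(ends e).1, nbhr _ (Or.inr (by rw [← h2]))⟩
end
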